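/- arXiv:1310.8318 — 4 statements merged into one kernel-verified Lean document; each statement's English description precedes it below -/
import Mathlib

section
/- Let A be a real symmetric 2n×2n matrix such that the Hamiltonian matrix JA is diagonalizable with purely imaginary spectrum (linearly stable), and suppose A is invertible. Then the number of negative eigenvalues of A (counted with multiplicity) is even. -/
open Matrix Polynomial

/-- The standard complex structure on `ℝ^{2n}`, in block form `(0, -I; I, 0)`. -/
noncomputable def Jmat (n : ℕ) : Matrix (Fin n ⊕ Fin n) (Fin n ⊕ Fin n) ℝ :=
  Matrix.fromBlocks 0 (-1) 1 0

/-- The Morse index: the number of negative eigenvalues, counted with algebraic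
multiplicity. -/
noncomputable def morseIndex {m : Type*} [Fintype m] [DecidableEq m]
    (A : Matrix m m ℝ) : ℕ :=
  Multiset.card (A.charpoly.roots.filter fun x => x < 0)

/-!
Since `σ(JA) ⊂ iℝ` and `A` is invertible, `JA` has no real eigenvalue, so its monic
characteristic polynomial `χ` is positive on `ℝ`; as `det J = 1` and the dimension is even,
`det A = det (JA) = χ(0) > 0`. For symmetric `A`, `det A` is the product of its real
eigenvalues, whose sign is `(-1) ^ n⁻(A)`.
-/

theorem Matrix.det_J (l R : Type*) [Fintype l] [DecidableEq l] [CommRing R] :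
    (J l R).det = 1 := by
  have hJ : J l R = fromBlocks 1 (-1) 0 1 * fromBlocks 1 0 1 1 * fromBlocks 1 (-1) 0 1 := by
    simp [J, fromBlocks_multiply]
  rw [hJ, det_mul, det_mul, det_fromBlocks_zero₂₁, det_fromBlocks_zero₁₂]
  simp

theorem Polynomial.Monic.eval_pos_of_forall_eval_ne_zero {p : ℝ[X]} (hp : p.Monic)
    (h : ∀ t, p.eval t ≠ 0) (x : ℝ) : 0 < p.eval x := by
  rcases eq_or_ne p.natDegree 0 with hdeg | hdeg
  · simp [eq_one_of_monic_natDegree_zero hp hdeg]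
  obtain ⟨T, hT⟩ := ((tendsto_atTop_of_leadingCoeff_nonneg p
    (natDegree_pos_iff_degree_pos.mp (Nat.pos_of_ne_zero hdeg))
    (by rw [hp.leadingCoeff]; exact zero_le_one)).eventually_gt_atTop 0).exists
  by_contra! hx
  obtain ⟨t, ht⟩ := intermediate_value_univ x T p.continuous ⟨hx, hT.le⟩
  exact h t ht

theorem Matrix.det_pos_of_forall_charpoly_eval_ne_zero {m : Type*} [Fintype m] [DecidableEq m]
    {M : Matrix m m ℝ} (hm : Even (Fintype.card m)) (h : ∀ t, M.charpoly.eval t ≠ 0) :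
    0 < M.det := by
  rw [det_eq_sign_charpoly_coeff, hm.neg_one_pow, one_mul, coeff_zero_eq_eval_zero]
  exact M.charpoly_monic.eval_pos_of_forall_eval_ne_zero h 0

theorem Multiset.prod_eq_neg_one_pow_card_filter_neg_mul_prod_abs {R : Type*} [CommRing R]
    [LinearOrder R] [IsStrictOrderedRing R] (s : Multiset R) :
    s.prod = (-1) ^ card (s.filter (· < 0)) * (s.map abs).prod := by
  induction s using Multiset.induction_on with
  | empty => simp
  | cons a s ih =>
    rw [filter_cons, prod_cons, map_cons, prod_cons, ih]
    split_ifs with ha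
    · rw [singleton_add, card_cons, pow_succ, abs_of_neg ha]; ring
    · rw [zero_add, abs_of_nonneg (not_lt.mp ha)]; ring

theorem Multiset.even_card_filter_neg_of_prod_pos {R : Type*} [CommRing R]
    [LinearOrder R] [IsStrictOrderedRing R] {s : Multiset R} (h : 0 < s.prod) :
    Even (card (s.filter (· < 0))) := by
  have habs : 0 ≤ (s.map abs).prod := prod_nonneg (by simp)
  rw [prod_eq_neg_one_pow_card_filter_neg_mul_prod_abs] at h
  by_contra hodd
  rw [Nat.not_even_iff_odd.mp hodd |>.neg_one_pow, neg_one_mul, neg_pos] at h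
  exact habs.not_gt h

theorem Matrix.IsSymm.even_morseIndex_of_det_pos {m : Type*} [Fintype m] [DecidableEq m]
    {A : Matrix m m ℝ} (hA : A.IsSymm) (h : 0 < A.det) : Even (morseIndex A) := by
  have hH : A.IsHermitian := by simpa [IsHermitian, IsSymm] using hA
  rw [det_eq_prod_roots_charpoly_of_splits hH.splits_charpoly] at h
  exact Multiset.even_card_filter_neg_of_prod_pos h

theorem morseIndex_even_of_linearly_stable_general (n : ℕ)
    (A : Matrix (Fin n ⊕ Fin n) (Fin n ⊕ Fin n) ℝ)
    (hA : A.IsSymm) (hinv : IsUnit A.det)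
    (hspec : ∀ lam : ℂ, ((Jmat n * A).map Complex.ofReal).charpoly.IsRoot lam → lam.re = 0) :
    Even (morseIndex A) := by
  have hcard : Even (Fintype.card (Fin n ⊕ Fin n)) := by simp
  have hdet : (Jmat n * A).det = A.det := by rw [det_mul, Jmat, ← J, det_J, one_mul]
  have hno_real : ∀ t : ℝ, (Jmat n * A).charpoly.eval t ≠ 0 := by
    intro t ht
    have hroot := IsRoot.map (f := Complex.ofRealHom) ht
    rw [← charpoly_map] at hroot
    have ht0 : t = 0 := by simpa using hspec t hroot
    rw [ht0, eval_charpoly, scalar_apply, diagonal_zero, zero_sub, det_neg,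
      hcard.neg_one_pow, one_mul, hdet] at ht
    exact hinv.ne_zero ht
  exact hA.even_morseIndex_of_det_pos <|
    hdet ▸ det_pos_of_forall_charpoly_eval_ne_zero hcard hno_real

/-- If `A` is real symmetric and invertible, and `JA` is linearly stable (purely imaginary
spectrum and diagonalisable over `ℂ`), then the number of negative eigenvalues of `A` is
even. -/
theorem morseIndex_even_of_linearly_stable (n : ℕ)
    (A : Matrix (Fin n ⊕ Fin n) (Fin n ⊕ Fin n) ℝ)
    (hA : A.IsSymm) (hinv : IsUnit A.det)
    (hspec : ∀ lam : ℂ, ((Jmat n * A).map Complex.ofReal).charpoly.IsRoot lam → lam.re = 0)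
    (hdiag : ∃ P D : Matrix (Fin n ⊕ Fin n) (Fin n ⊕ Fin n) ℂ, IsUnit P.det ∧ D.IsDiag ∧
      (Jmat n * A).map Complex.ofReal = P * D * P⁻¹) :
    Even (morseIndex A) :=
  morseIndex_even_of_linearly_stable_general n A hA hinv hspec
end

section
/- Let S be a complex symplectic matrix (S† J S = J) and λ an eigenvalue of S with |λ| ≠ 1 of algebraic multiplicity d. Then the Hermitian form g(v,w) = ⟨iJ v, w⟩ restricted to the sum of the generalized eigenspaces of λ and of (conjugate λ)⁻¹ has a d-dimensional isotropic subspace; in particular g has zero signature on that 2d-dimensional subspace. -/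
open Matrix Polynomial

/-- The standard complex structure on `ℂ^{2n}`, in block form `(0, -I; I, 0)`. -/
noncomputable def Jc (n : ℕ) : Matrix (Fin n ⊕ Fin n) (Fin n ⊕ Fin n) ℂ :=
  Matrix.fromBlocks 0 (-1) 1 0

/-- The Krein Hermitian form `g(v, w) = ⟨iJ v, w⟩` on `ℂ^{2n}` (with the standard Hermitian
inner product, conjugate-linear in the first variable). -/
noncomputable def kreinForm (n : ℕ) (v w : (Fin n ⊕ Fin n) → ℂ) : ℂ :=
  star ((Complex.I • Jc n).mulVec v) ⬝ᵥ w

/-- The generalized eigenspace `E_λ = ∪_j ker (S - λ I)^j`. -/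
noncomputable def genEig (n : ℕ) (S : Matrix (Fin n ⊕ Fin n) (Fin n ⊕ Fin n) ℂ) (lam : ℂ) :
    Submodule ℂ ((Fin n ⊕ Fin n) → ℂ) :=
  ⨆ j : ℕ, LinearMap.ker (Matrix.toLin' (S - lam • 1) ^ j)

/-- The maximal dimension of a subspace of `F` on which the Krein form is positive
definite. -/
noncomputable def posIndex (n : ℕ) (F : Submodule ℂ ((Fin n ⊕ Fin n) → ℂ)) : ℕ :=
  sSup {k | ∃ W : Submodule ℂ ((Fin n ⊕ Fin n) → ℂ), W ≤ F ∧ Module.finrank ℂ W = k ∧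
    ∀ v ∈ W, v ≠ 0 → 0 < (kreinForm n v v).re}

/-- The maximal dimension of a subspace of `F` on which the Krein form is negative
definite. -/
noncomputable def negIndex (n : ℕ) (F : Submodule ℂ ((Fin n ⊕ Fin n) → ℂ)) : ℕ :=
  sSup {k | ∃ W : Submodule ℂ ((Fin n ⊕ Fin n) → ℂ), W ≤ F ∧ Module.finrank ℂ W = k ∧
    ∀ v ∈ W, v ≠ 0 → (kreinForm n v v).re < 0}

/-!
`S` preserves the Krein form, so expanding `g(Sv, Sw) = g(v, w)` for generalized eigenvectors
`v ∈ E_μ₁`, `w ∈ E_μ₂` shows, by induction on their heights, that `g(v, w) = 0` unless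
`conj μ₁ * μ₂ = 1`. For `|λ| ≠ 1` both `E_λ` and `E_{(conj λ)⁻¹}` are therefore isotropic, and
they are independent; `E_λ` has dimension the algebraic multiplicity of `λ`. On their direct sum
the reflection `x + y ↦ x - y` negates `g(v, v)`, so it carries positive definite subspaces to
negative definite ones of the same dimension and vice versa.
-/

namespace Module.End

variable {R M : Type*} [CommRing R] [AddCommGroup M] [Module R M] {f : End R M}

theorem sub_smul_apply_mem_genEigenspace {μ : R} {k : ℕ} {v : M}
    (hv : v ∈ f.genEigenspace μ (k + 1 : ℕ)) : (f - μ • 1) v ∈ f.genEigenspace μ k := by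
  rw [mem_genEigenspace_nat, LinearMap.mem_ker] at hv ⊢
  rwa [pow_succ, mul_apply] at hv

theorem maxGenEigenspace_zero_eq_bot (hf : Function.Injective f) : f.maxGenEigenspace 0 = ⊥ := by
  refine eq_bot_iff.2 fun v hv => ?_
  obtain ⟨k, hk⟩ := (f.mem_maxGenEigenspace 0 v).1 hv
  rw [zero_smul, sub_zero] at hk
  exact (injective_iff_map_eq_zero _).1 (coe_pow f k ▸ hf.iterate k) v hk

end Module.End

namespace LinearMap

section Eigenspace

variable {K M : Type*} [Field K] [StarRing K] [AddCommGroup M] [Module K M]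
  {f : Module.End K M} {B : M →ₗ⋆[K] M →ₗ[K] K}

theorem apply_eq_zero_of_mem_genEigenspace (hf : ∀ v w, B (f v) (f w) = B v w) {μ₁ μ₂ : K}
    (h : starRingEnd K μ₁ * μ₂ ≠ 1) (k l : ℕ) :
    ∀ v ∈ f.genEigenspace μ₁ k, ∀ w ∈ f.genEigenspace μ₂ l, B v w = 0 := by
  induction k generalizing l with
  | zero => simp
  | succ k ihk =>
    induction l with
    | zero => simp
    | succ l ihl =>
      intro v hv w hw
      set v' := (f - μ₁ • 1) v
      set w' := (f - μ₂ • 1) w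
      have hv' := Module.End.sub_smul_apply_mem_genEigenspace hv
      have hw' := Module.End.sub_smul_apply_mem_genEigenspace hw
      have hfv : f v = μ₁ • v + v' := by simp [v']
      have hfw : f w = μ₂ • w + w' := by simp [w']
      -- `f` preserves `B`, and the three cross terms vanish by induction.
      have hB : B v w = starRingEnd K μ₁ * μ₂ * B v w :=
        calc B v w = B (f v) (f w) := (hf v w).symm
          _ = starRingEnd K μ₁ * μ₂ * B v w := by
            simp only [hfv, hfw, map_add, map_smulₛₗ, add_apply, smul_apply,
              ihl v hv w' hw', ihk _ v' hv' w hw, ihk _ v' hv' w' hw', RingHom.id_apply,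
              smul_eq_mul]
            ring
      have : (1 - starRingEnd K μ₁ * μ₂) * B v w = 0 := by linear_combination hB
      exact (mul_eq_zero.1 this).resolve_left (sub_ne_zero.2 h.symm)

theorem apply_eq_zero_of_mem_maxGenEigenspace (hf : ∀ v w, B (f v) (f w) = B v w)
    {μ₁ μ₂ : K} (h : starRingEnd K μ₁ * μ₂ ≠ 1) {v w : M} (hv : v ∈ f.maxGenEigenspace μ₁)
    (hw : w ∈ f.maxGenEigenspace μ₂) : B v w = 0 := by
  obtain ⟨k, hk⟩ := (f.mem_maxGenEigenspace μ₁ v).1 hv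
  obtain ⟨l, hl⟩ := (f.mem_maxGenEigenspace μ₂ w).1 hw
  exact apply_eq_zero_of_mem_genEigenspace hf h k l v (Module.End.mem_genEigenspace_nat.2 hk)
    w (Module.End.mem_genEigenspace_nat.2 hl)

end Eigenspace

section DefiniteSubspaces

variable {R M : Type*} [CommRing R] [StarRing R] [AddCommGroup M] [Module R M]

def definiteFinranks (B : M →ₗ⋆[R] M →ₗ[R] R) (F : Submodule R M) (P : R → Prop) : Set ℕ :=
  {k | ∃ W : Submodule R M, W ≤ F ∧ Module.finrank R W = k ∧ ∀ v ∈ W, v ≠ 0 → P (B v v)}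

variable {B : M →ₗ⋆[R] M →ₗ[R] R} {E₁ E₂ : Submodule R M}

theorem definiteFinranks_sup_subset (hd : Disjoint E₁ E₂) (h₁ : ∀ x ∈ E₁, B x x = 0)
    (h₂ : ∀ y ∈ E₂, B y y = 0) {P Q : R → Prop} (hPQ : ∀ z, P z → Q (-z)) :
    definiteFinranks B (E₁ ⊔ E₂) P ⊆ definiteFinranks B (E₁ ⊔ E₂) Q := by
  rintro _ ⟨W, hW, rfl, hP⟩
  set σ := E₁.subtype.coprod E₂.subtype
  set τ := E₁.subtype.coprod (-E₂.subtype)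
  have hσ : Function.Injective σ := by
    rw [← ker_eq_bot, ker_coprod_of_disjoint_range] <;> simp [hd]
  have hτ : Function.Injective τ := by
    rw [← ker_eq_bot, ker_coprod_of_disjoint_range] <;> simp [range_neg, hd]
  have hBτ : ∀ p, B (τ p) (τ p) = -B (σ p) (σ p) := by
    rintro ⟨x, y⟩
    simp only [σ, τ, coprod_apply, neg_apply, Submodule.subtype_apply, map_add, map_neg,
      add_apply, neg_apply, h₁ x x.2, h₂ y y.2]
    ring
  refine ⟨(W.comap σ).map τ, ?_, ?_, ?_⟩
  · rintro _ ⟨p, -, rfl⟩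
    exact add_mem (Submodule.mem_sup_left p.1.2) (neg_mem (Submodule.mem_sup_right p.2.2))
  · rw [← (Submodule.equivMapOfInjective τ hτ _).finrank_eq,
      (Submodule.equivMapOfInjective σ hσ _).finrank_eq,
      Submodule.map_comap_eq_of_le (by simpa [σ, range_coprod] using hW)]
  · rintro _ ⟨p, hp, rfl⟩ hp0
    rw [hBτ]
    exact hPQ _ (hP _ hp fun h => hp0 (by rw [hσ (h.trans (map_zero σ).symm), map_zero]))

end DefiniteSubspaces

end LinearMap

theorem Complex.conj_mul_self_ne_one {z : ℂ} (hz : ‖z‖ ≠ 1) : starRingEnd ℂ z * z ≠ 1 := by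
  rw [Complex.conj_mul']
  exact_mod_cast (pow_eq_one_iff_of_nonneg (norm_nonneg z) two_ne_zero).not.2 hz

theorem Complex.ne_inv_conj {z : ℂ} (hz₀ : z ≠ 0) (hz : ‖z‖ ≠ 1) : z ≠ (starRingEnd ℂ z)⁻¹ := by
  intro h
  apply Complex.conj_mul_self_ne_one hz
  nth_rw 2 [h]
  rw [mul_inv_cancel₀]
  simpa using hz₀

noncomputable def kreinSesq (n : ℕ) :
    ((Fin n ⊕ Fin n) → ℂ) →ₗ⋆[ℂ] ((Fin n ⊕ Fin n) → ℂ) →ₗ[ℂ] ℂ :=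
  LinearMap.mk₂'ₛₗ (starRingEnd ℂ) (RingHom.id ℂ) (kreinForm n)
    (by simp [kreinForm, mulVec_add, add_dotProduct])
    (by simp [kreinForm, mulVec_smul, smul_dotProduct])
    (by simp [kreinForm, dotProduct_add])
    (by simp [kreinForm, dotProduct_smul])

theorem kreinSesq_apply (n : ℕ) (v w : (Fin n ⊕ Fin n) → ℂ) :
    kreinSesq n v w = kreinForm n v w := rfl

theorem posIndex_eq_sSup_definiteFinranks (n : ℕ) (F : Submodule ℂ ((Fin n ⊕ Fin n) → ℂ)) :
    posIndex n F = sSup (LinearMap.definiteFinranks (kreinSesq n) F (0 < ·.re)) := rfl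

theorem negIndex_eq_sSup_definiteFinranks (n : ℕ) (F : Submodule ℂ ((Fin n ⊕ Fin n) → ℂ)) :
    negIndex n F = sSup (LinearMap.definiteFinranks (kreinSesq n) F (·.re < 0)) := rfl

theorem conjTranspose_I_smul_Jc (n : ℕ) : (Complex.I • Jc n)ᴴ = Complex.I • Jc n := by
  rw [conjTranspose_smul, Jc, fromBlocks_conjTranspose]
  simp [← smul_neg, fromBlocks_neg]

section Symplectic

variable {n : ℕ} {S : Matrix (Fin n ⊕ Fin n) (Fin n ⊕ Fin n) ℂ}

theorem kreinForm_mulVec_mulVec (hS : Sᴴ * Jc n * S = Jc n) (v w : (Fin n ⊕ Fin n) → ℂ) :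
    kreinForm n (S *ᵥ v) (S *ᵥ w) = kreinForm n v w := by
  have h2 : Sᴴ * (Complex.I • Jc n) * S = Complex.I • Jc n := by
    rw [Matrix.mul_smul, Matrix.smul_mul, hS]
  unfold kreinForm
  rw [Matrix.mulVec_mulVec, star_mulVec, star_mulVec, dotProduct_mulVec,
    vecMul_vecMul, conjTranspose_mul, Matrix.mul_assoc, ← Matrix.mul_assoc,
    conjTranspose_I_smul_Jc, h2, ← dotProduct_mulVec]

theorem mulVec_injective_of_conjTranspose_mul_Jc_mul (hS : Sᴴ * Jc n * S = Jc n) :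
    Function.Injective S.mulVec := by
  have hleft : -(Jc n * Sᴴ * Jc n) * S = 1 := by
    rw [Matrix.neg_mul, Matrix.mul_assoc, Matrix.mul_assoc, ← Matrix.mul_assoc Sᴴ, hS]
    exact neg_eq_iff_eq_neg.2 (J_squared (Fin n) ℂ)
  exact mulVec_injective_iff_isUnit.2 <|
    (isUnit_iff_isUnit_det _).2 (isUnit_det_of_left_inverse hleft)

theorem genEig_eq_maxGenEigenspace (μ : ℂ) :
    genEig n S μ = Module.End.maxGenEigenspace (toLin' S) μ := by
  simp_rw [← Module.End.iSup_genEigenspace_eq, Module.End.genEigenspace_nat, genEig]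
  congr! 4
  ext v
  simp

theorem kreinSesq_toLin' (hS : Sᴴ * Jc n * S = Jc n) (v w : (Fin n ⊕ Fin n) → ℂ) :
    kreinSesq n (toLin' S v) (toLin' S w) = kreinSesq n v w := by
  rw [kreinSesq_apply, kreinSesq_apply, toLin'_apply, toLin'_apply, kreinForm_mulVec_mulVec hS]

theorem kreinForm_eq_zero_of_mem_maxGenEigenspace (hS : Sᴴ * Jc n * S = Jc n) {μ₁ μ₂ : ℂ}
    (h : starRingEnd ℂ μ₁ * μ₂ ≠ 1) {v w : (Fin n ⊕ Fin n) → ℂ}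
    (hv : v ∈ Module.End.maxGenEigenspace (toLin' S) μ₁)
    (hw : w ∈ Module.End.maxGenEigenspace (toLin' S) μ₂) : kreinForm n v w = 0 := by
  rw [← kreinSesq_apply]
  exact LinearMap.apply_eq_zero_of_mem_maxGenEigenspace (kreinSesq_toLin' hS) h hv hw

end Symplectic

theorem krein_form_zero_signature_off_circle_general (n : ℕ)
    (S : Matrix (Fin n ⊕ Fin n) (Fin n ⊕ Fin n) ℂ)
    (hS : Sᴴ * Jc n * S = Jc n) (lam : ℂ)
    (habs : ‖lam‖ ≠ 1) :
    ∃ W : Submodule ℂ ((Fin n ⊕ Fin n) → ℂ),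
      W ≤ genEig n S lam ⊔ genEig n S ((starRingEnd ℂ lam)⁻¹) ∧
      Module.finrank ℂ W = S.charpoly.rootMultiplicity lam ∧
      (∀ v ∈ W, ∀ w ∈ W, kreinForm n v w = 0) ∧
      posIndex n (genEig n S lam ⊔ genEig n S ((starRingEnd ℂ lam)⁻¹)) =
        negIndex n (genEig n S lam ⊔ genEig n S ((starRingEnd ℂ lam)⁻¹)) := by
  set f : Module.End ℂ _ := toLin' S
  have isotropic {μ : ℂ} (hμ : ‖μ‖ ≠ 1) :
      ∀ v ∈ f.maxGenEigenspace μ, ∀ w ∈ f.maxGenEigenspace μ, kreinForm n v w = 0 :=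
    fun _ hv _ hw =>
      kreinForm_eq_zero_of_mem_maxGenEigenspace hS (Complex.conj_mul_self_ne_one hμ) hv hw
  have hdisj : Disjoint (f.maxGenEigenspace lam) (f.maxGenEigenspace (starRingEnd ℂ lam)⁻¹) := by
    -- For `λ = 0` the second space is `E_0` again (`0⁻¹ = 0`), but `S` is invertible.
    rcases eq_or_ne lam 0 with rfl | hlam₀
    · rw [Module.End.maxGenEigenspace_zero_eq_bot
        (mulVec_injective_of_conjTranspose_mul_Jc_mul hS)]
      exact disjoint_bot_left
    · exact Module.End.disjoint_genEigenspace f (Complex.ne_inv_conj hlam₀ habs) ⊤ ⊤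
  have swap {P Q : ℂ → Prop} (hPQ : ∀ z, P z → Q (-z)) :=
    LinearMap.definiteFinranks_sup_subset (B := kreinSesq n) hdisj
      (fun x hx => isotropic habs x hx x hx)
      (fun y hy => isotropic (by simpa using habs) y hy y hy) hPQ
  simp only [genEig_eq_maxGenEigenspace, posIndex_eq_sSup_definiteFinranks,
    negIndex_eq_sSup_definiteFinranks]
  refine ⟨f.maxGenEigenspace lam, le_sup_left, ?_, isotropic habs, ?_⟩
  · rw [LinearMap.finrank_maxGenEigenspace_eq, charpoly_toLin']
  · exact congrArg sSup <|
      (swap fun z hz => by simpa using hz).antisymm (swap fun z hz => by simpa using hz)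

/-- If `λ` is an eigenvalue of the complex symplectic matrix `S` with `|λ| ≠ 1` and algebraic
multiplicity `d`, then the Krein form restricted to `E_λ ⊕ E_{(conj λ)⁻¹}` has a
`d`-dimensional isotropic subspace; in particular it has zero signature there. -/
theorem krein_form_zero_signature_off_circle (n : ℕ)
    (S : Matrix (Fin n ⊕ Fin n) (Fin n ⊕ Fin n) ℂ)
    (hS : Sᴴ * Jc n * S = Jc n) (lam : ℂ)
    (hlam : S.charpoly.IsRoot lam) (habs : ‖lam‖ ≠ 1) :
    ∃ W : Submodule ℂ ((Fin n ⊕ Fin n) → ℂ),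
      W ≤ genEig n S lam ⊔ genEig n S ((starRingEnd ℂ lam)⁻¹) ∧
      Module.finrank ℂ W = S.charpoly.rootMultiplicity lam ∧
      (∀ v ∈ W, ∀ w ∈ W, kreinForm n v w = 0) ∧
      posIndex n (genEig n S lam ⊔ genEig n S ((starRingEnd ℂ lam)⁻¹)) =
        negIndex n (genEig n S lam ⊔ genEig n S ((starRingEnd ℂ lam)⁻¹)) :=
  krein_form_zero_signature_off_circle_general n S hS lam habs
end

section
/- For the α-homogeneous n-body potential, the trace of M⁻¹ D²U_α(x̄) equals α² ∑_{i<j} (m_i + m_j)/|x̄_i − x̄_j|^{α+2}; for the logarithmic potential the trace of M⁻¹ D²U_log(x̄) equals 0. -/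
/-!
Both potentials are pair potentials `∑_{i<j} m_i m_j φ(sᵢⱼ)` in the squared distances
`sᵢⱼ = |x_i - x_j|²`. By the chain rule the Hessian of a pair term is
`φ'(s) D²s + φ''(s) Ds ⊗ Ds`; only the coordinates of bodies `i` and `j` see it, so weighting
its diagonal by the inverse masses gives `(m_i + m_j) · 4 (φ'(s) + s φ''(s))`, which is `m_i + m_j`
times the planar Laplacian of `w ↦ φ(|w|²)`. For `φ(s) = s^(-α/2)` this is `α² s^(-α/2 - 1)`,
and for `φ(s) = -(log s)/2` it vanishes, `log |w|` being harmonic in the plane.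
-/

open Finset

/-- The Euclidean distance between the planar positions of bodies `i` and `j`. -/
noncomputable def dist2 {n : ℕ} (q : Fin n → Fin 2 → ℝ) (i j : Fin n) : ℝ :=
  Real.sqrt ((q i 0 - q j 0) ^ 2 + (q i 1 - q j 1) ^ 2)

/-- The `α`-homogeneous `n`-body potential `U_α(q) = ∑_{i<j} m_i m_j / |q_i - q_j|^α`. -/
noncomputable def Ualpha {n : ℕ} (m : Fin n → ℝ) (α : ℝ) (q : Fin n → Fin 2 → ℝ) : ℝ :=
  ∑ i : Fin n, ∑ j ∈ Finset.univ.filter (fun j => i < j),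
    m i * m j / Real.rpow (dist2 q i j) α

/-- The logarithmic `n`-body potential `U_log(q) = -∑_{i<j} m_i m_j log |q_i - q_j|`. -/
noncomputable def Ulog {n : ℕ} (m : Fin n → ℝ) (q : Fin n → Fin 2 → ℝ) : ℝ :=
  -∑ i : Fin n, ∑ j ∈ Finset.univ.filter (fun j => i < j),
    m i * m j * Real.log (dist2 q i j)

/-- The standard basis vector of `ℝ^{2n} = (ℝ²)ⁿ` in slot `(i, c)`. -/
def basisVec {n : ℕ} (i : Fin n) (c : Fin 2) : Fin n → Fin 2 → ℝ :=
  fun k d => if k = i ∧ d = c then 1 else 0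

open Filter Topology

theorem iteratedFDeriv_two_apply_of_hasFDerivAt {𝕜 E F : Type*} [NontriviallyNormedField 𝕜]
    [NormedAddCommGroup E] [NormedSpace 𝕜 E] [NormedAddCommGroup F] [NormedSpace 𝕜 F]
    {f : E → F} {f' : E → E →L[𝕜] F} {f'' : E →L[𝕜] E →L[𝕜] F} {x : E}
    (hf : ∀ᶠ y in 𝓝 x, HasFDerivAt f (f' y) y) (hf' : HasFDerivAt f' f'' x) (u v : E) :
    iteratedFDeriv 𝕜 2 f x ![u, v] = f'' u v := by
  have hff' : fderiv 𝕜 f =ᶠ[𝓝 x] f' := hf.mono fun y hy => hy.fderiv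
  rw [iteratedFDeriv_two_apply, hff'.fderiv_eq, hf'.fderiv]
  rfl

theorem Finset.sum_mul_sq_ite_sub_ite {ι R : Type*} [Fintype ι] [DecidableEq ι] [CommRing R]
    (w : ι → R) {i j : ι} (hij : i ≠ j) :
    ∑ k, w k * ((if i = k then 1 else 0) - if j = k then 1 else 0) ^ 2 = w i + w j := by
  have hk : ∀ k, w k * ((if i = k then 1 else 0) - if j = k then 1 else 0) ^ 2 =
      (if i = k then w k else 0) + if j = k then w k else 0 := by
    intro k
    by_cases hi : i = k <;> by_cases hj : j = k
    · exact absurd (hi.trans hj.symm) hij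
    all_goals simp [hi, hj]
  simp [hk, sum_add_distrib]

namespace NBody

noncomputable section

variable {n : ℕ}

def sqDist (i j : Fin n) (q : Fin n → Fin 2 → ℝ) : ℝ :=
  ∑ c, (q i c - q j c) ^ 2

def pairPotential (m : Fin n → ℝ) (φ : ℝ → ℝ) (q : Fin n → Fin 2 → ℝ) : ℝ :=
  ∑ i, ∑ j ∈ univ.filter (fun j => i < j), m i * m j * φ (sqDist i j q)

/-- `tr (M⁻¹ D²f(x))`. -/
def massTrace (m : Fin n → ℝ) (f : (Fin n → Fin 2 → ℝ) → ℝ) (x : Fin n → Fin 2 → ℝ) : ℝ :=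
  ∑ i, ∑ c, (m i)⁻¹ * iteratedFDeriv ℝ 2 f x ![basisVec i c, basisVec i c]

def coordDiff (i j : Fin n) (c : Fin 2) : (Fin n → Fin 2 → ℝ) →L[ℝ] ℝ :=
  (ContinuousLinearMap.proj (R := ℝ) (φ := fun _ : Fin 2 => ℝ) c).comp
    (ContinuousLinearMap.proj (R := ℝ) (φ := fun _ : Fin n => Fin 2 → ℝ) i -
      ContinuousLinearMap.proj j)

@[simp] lemma coordDiff_apply (i j : Fin n) (c : Fin 2) (q : Fin n → Fin 2 → ℝ) :
    coordDiff i j c q = q i c - q j c := rfl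

def sqDistForm (i j : Fin n) : (Fin n → Fin 2 → ℝ) →L[ℝ] (Fin n → Fin 2 → ℝ) →L[ℝ] ℝ :=
  ∑ c, (2 • coordDiff i j c).smulRight (coordDiff i j c)

lemma sqDistForm_apply (i j : Fin n) (u v : Fin n → Fin 2 → ℝ) :
    sqDistForm i j u v = ∑ c, 2 * (u i c - u j c) * (v i c - v j c) := by
  simp [sqDistForm]

lemma sqDistForm_basisVec (i j k : Fin n) (c : Fin 2) (y : Fin n → Fin 2 → ℝ) :
    sqDistForm i j y (basisVec k c) =
      2 * (y i c - y j c) * ((if i = k then 1 else 0) - if j = k then 1 else 0) := by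
  fin_cases c <;> simp [sqDistForm_apply, basisVec]

lemma basisVec_apply_self (i k : Fin n) (c : Fin 2) :
    basisVec k c i c = if i = k then 1 else 0 := by
  simp [basisVec]

lemma hasFDerivAt_sqDist (i j : Fin n) (q : Fin n → Fin 2 → ℝ) :
    HasFDerivAt (sqDist i j) (sqDistForm i j q) q := by
  show HasFDerivAt (fun y => ∑ c, coordDiff i j c y ^ 2) _ q
  refine (HasFDerivAt.fun_sum (u := univ) fun c _ =>
    ((coordDiff i j c).hasFDerivAt (x := q)).pow 2).congr_fderiv ?_
  ext v
  simp [sqDistForm_apply]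

lemma sqDist_nonneg (i j : Fin n) (q : Fin n → Fin 2 → ℝ) : 0 ≤ sqDist i j q :=
  sum_nonneg fun _ _ => sq_nonneg _

lemma sqDist_pos {i j : Fin n} {q : Fin n → Fin 2 → ℝ} (h : q i ≠ q j) : 0 < sqDist i j q := by
  refine (sqDist_nonneg i j q).lt_of_ne fun h0 => h (funext fun c => ?_)
  have := (sum_eq_zero_iff_of_nonneg fun c _ => sq_nonneg (q i c - q j c)).mp h0.symm c
    (mem_univ c)
  simpa [sub_eq_zero] using this

lemma eventually_sqDist_pos {x : Fin n → Fin 2 → ℝ} (hx : ∀ i j, i ≠ j → x i ≠ x j) :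
    ∀ᶠ y in 𝓝 x, ∀ i j, i < j → 0 < sqDist i j y := by
  refine eventually_all.2 fun i => eventually_all.2 fun j => ?_
  by_cases hij : i < j
  · have hcont : Continuous (sqDist i j) := by unfold sqDist; fun_prop
    exact (hcont.continuousAt.eventually_const_lt (sqDist_pos (hx i j hij.ne))).mono
      fun y hy _ => hy
  · exact Eventually.of_forall fun y h => absurd h hij

lemma dist2_eq_sqrt_sqDist (q : Fin n → Fin 2 → ℝ) (i j : Fin n) :
    dist2 q i j = √(sqDist i j q) := by
  rw [sqDist, Fin.sum_univ_two]
  rfl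

lemma Ualpha_eq_pairPotential (m : Fin n → ℝ) (α : ℝ) :
    Ualpha m α = pairPotential m (fun t => t ^ (-(α / 2))) := by
  funext q
  refine sum_congr rfl fun i _ => sum_congr rfl fun j _ => ?_
  rw [Real.rpow_eq_pow, dist2_eq_sqrt_sqDist, ← Real.rpow_div_two_eq_sqrt _ (sqDist_nonneg i j q),
    div_eq_mul_inv, ← Real.rpow_neg (sqDist_nonneg i j q)]

lemma Ulog_eq_pairPotential (m : Fin n → ℝ) :
    Ulog m = pairPotential m (fun t => -(Real.log t / 2)) := by
  funext q
  rw [Ulog, pairPotential, ← sum_neg_distrib]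
  refine sum_congr rfl fun i _ => ?_
  rw [← sum_neg_distrib]
  refine sum_congr rfl fun j _ => ?_
  rw [dist2_eq_sqrt_sqDist, Real.log_sqrt (sqDist_nonneg i j q)]
  ring

variable {m : Fin n → ℝ} {φ φ₁ φ₂ : ℝ → ℝ} {x : Fin n → Fin 2 → ℝ}

theorem iteratedFDeriv_two_pairPotential (hφ : ∀ t, 0 < t → HasDerivAt φ (φ₁ t) t)
    (hφ₁ : ∀ t, 0 < t → HasDerivAt φ₁ (φ₂ t) t) (hx : ∀ i j, i ≠ j → x i ≠ x j)
    (u v : Fin n → Fin 2 → ℝ) :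
    iteratedFDeriv ℝ 2 (pairPotential m φ) x ![u, v] =
      ∑ i, ∑ j ∈ univ.filter (fun j => i < j), m i * m j *
        (φ₁ (sqDist i j x) * sqDistForm i j u v +
          φ₂ (sqDist i j x) * (sqDistForm i j x u * sqDistForm i j x v)) := by
  have hV : ∀ y, (∀ i j, i < j → 0 < sqDist i j y) → HasFDerivAt (pairPotential m φ)
      (∑ i, ∑ j ∈ univ.filter (fun j => i < j),
        (m i * m j) • (φ₁ (sqDist i j y) • sqDistForm i j y)) y := fun y hy =>
    HasFDerivAt.fun_sum fun i _ => HasFDerivAt.fun_sum fun j hj =>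
      ((hφ _ (hy i j (mem_filter.1 hj).2)).comp_hasFDerivAt y
        (hasFDerivAt_sqDist i j y)).const_mul (m i * m j)
  have hx' := (eventually_sqDist_pos hx).self_of_nhds
  have hV' := HasFDerivAt.fun_sum (u := univ) fun i _ =>
    HasFDerivAt.fun_sum (u := univ.filter (fun j => i < j)) fun j hj =>
      ((((hφ₁ _ (hx' i j (mem_filter.1 hj).2)).comp_hasFDerivAt x
        (hasFDerivAt_sqDist i j x)).smul (sqDistForm i j).hasFDerivAt).const_smul (m i * m j))
  refine (iteratedFDeriv_two_apply_of_hasFDerivAt ((eventually_sqDist_pos hx).mono hV) hV'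
    u v).trans ?_
  simp only [FunLike.coe_sum, Finset.sum_apply, FunLike.coe_smul, Pi.smul_apply, add_apply,
    ContinuousLinearMap.smulRight_apply, Function.comp_apply, smul_eq_mul]
  exact sum_congr rfl fun i _ => sum_congr rfl fun j _ => by ring

theorem massTrace_pairPotential (hm : ∀ i, m i ≠ 0) (hφ : ∀ t, 0 < t → HasDerivAt φ (φ₁ t) t)
    (hφ₁ : ∀ t, 0 < t → HasDerivAt φ₁ (φ₂ t) t) (hx : ∀ i j, i ≠ j → x i ≠ x j) :
    massTrace m (pairPotential m φ) x = ∑ i, ∑ j ∈ univ.filter (fun j => i < j),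
      (m i + m j) * (4 * (φ₁ (sqDist i j x) + sqDist i j x * φ₂ (sqDist i j x))) := by
  have hswap : ∀ {κ : Type} (s : Finset κ) (f : κ → Fin n → Fin n → ℝ),
      ∑ k ∈ s, ∑ i, ∑ j ∈ univ.filter (fun j => i < j), f k i j =
        ∑ i, ∑ j ∈ univ.filter (fun j => i < j), ∑ k ∈ s, f k i j := fun s f => by
    rw [sum_comm]
    exact sum_congr rfl fun i _ => sum_comm
  calc massTrace m (pairPotential m φ) x
      = ∑ k, ∑ c, ∑ i, ∑ j ∈ univ.filter (fun j => i < j),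
          (m k)⁻¹ * ((if i = k then 1 else 0) - if j = k then 1 else 0) ^ 2 *
            (m i * m j *
              (2 * φ₁ (sqDist i j x) + 4 * (x i c - x j c) ^ 2 * φ₂ (sqDist i j x))) := by
        unfold massTrace
        refine sum_congr rfl fun k _ => sum_congr rfl fun c _ => ?_
        rw [iteratedFDeriv_two_pairPotential hφ hφ₁ hx, mul_sum]
        refine sum_congr rfl fun i _ => ?_
        rw [mul_sum]
        refine sum_congr rfl fun j _ => ?_
        simp only [sqDistForm_basisVec, basisVec_apply_self]
        ring
    _ = ∑ i, ∑ j ∈ univ.filter (fun j => i < j), m i * m j *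
          (∑ k, (m k)⁻¹ * ((if i = k then 1 else 0) - if j = k then 1 else 0) ^ 2) *
            ∑ c, (2 * φ₁ (sqDist i j x) + 4 * (x i c - x j c) ^ 2 * φ₂ (sqDist i j x)) := by
        rw [sum_congr rfl fun k _ => hswap univ _, hswap]
        refine sum_congr rfl fun i _ => sum_congr rfl fun j _ => ?_
        simp only [mul_sum, sum_mul]
        conv_rhs => rw [sum_comm]
        exact sum_congr rfl fun k _ => sum_congr rfl fun c _ => by ring
    _ = _ := by
        refine sum_congr rfl fun i _ => sum_congr rfl fun j hj => ?_
        rw [sum_mul_sq_ite_sub_ite _ (mem_filter.1 hj).2.ne]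
        simp only [sqDist, Fin.sum_univ_two]
        field_simp [hm i, hm j]
        ring

theorem massTrace_Ualpha (hm : ∀ i, m i ≠ 0) (α : ℝ) (hx : ∀ i j, i ≠ j → x i ≠ x j) :
    massTrace m (Ualpha m α) x = α ^ 2 * ∑ i, ∑ j ∈ univ.filter (fun j => i < j),
      (m i + m j) / Real.rpow (dist2 x i j) (α + 2) := by
  have hlap : ∀ t : ℝ, 0 < t → 4 * (-(α / 2) * t ^ (-(α / 2) - 1) +
      t * (-(α / 2) * ((-(α / 2) - 1) * t ^ (-(α / 2) - 1 - 1)))) = α ^ 2 / √t ^ (α + 2) := by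
    intro t ht
    have hsqrt : √t ^ (α + 2) = (t ^ (-(α / 2) - 1))⁻¹ := by
      rw [← Real.rpow_div_two_eq_sqrt _ ht.le, ← Real.rpow_neg ht.le]
      congr 1
      ring
    rw [Real.rpow_sub_one ht.ne' (-(α / 2) - 1), hsqrt]
    field_simp
    ring
  rw [Ualpha_eq_pairPotential, massTrace_pairPotential
    (φ₁ := fun t => -(α / 2) * t ^ (-(α / 2) - 1))
    (φ₂ := fun t => -(α / 2) * ((-(α / 2) - 1) * t ^ (-(α / 2) - 1 - 1))) hm
    (fun t ht => Real.hasDerivAt_rpow_const (Or.inl ht.ne'))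
    (fun t ht => (Real.hasDerivAt_rpow_const (Or.inl ht.ne')).const_mul _) hx, mul_sum]
  refine sum_congr rfl fun i _ => ?_
  rw [mul_sum]
  refine sum_congr rfl fun j hj => ?_
  rw [hlap _ (sqDist_pos (hx i j (mem_filter.1 hj).2.ne)), Real.rpow_eq_pow,
    dist2_eq_sqrt_sqDist]
  ring

theorem massTrace_Ulog (hm : ∀ i, m i ≠ 0) (hx : ∀ i j, i ≠ j → x i ≠ x j) :
    massTrace m (Ulog m) x = 0 := by
  rw [Ulog_eq_pairPotential, massTrace_pairPotential (φ := fun t => -(Real.log t / 2))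
    (φ₁ := fun t => -(t⁻¹ / 2)) (φ₂ := fun t => -(-(t ^ 2)⁻¹ / 2)) hm
    (fun t ht => ((Real.hasDerivAt_log ht.ne').div_const 2).neg)
    (fun t ht => ((hasDerivAt_inv ht.ne').div_const 2).neg) hx]
  refine sum_eq_zero fun i _ => sum_eq_zero fun j hj => ?_
  have hs := sqDist_pos (hx i j (mem_filter.1 hj).2.ne)
  field_simp
  ring

end

end NBody

theorem trace_inv_mass_hessian_general {n : ℕ} (m : Fin n → ℝ) (hm : ∀ i, 0 < m i)
    (α : ℝ)
    (x : Fin n → Fin 2 → ℝ) (hx : ∀ i j, i ≠ j → x i ≠ x j) :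
    (∑ i : Fin n, ∑ c : Fin 2, (m i)⁻¹ *
        iteratedFDeriv ℝ 2 (Ualpha m α) x ![basisVec i c, basisVec i c] =
      α ^ 2 * ∑ i : Fin n, ∑ j ∈ Finset.univ.filter (fun j => i < j),
        (m i + m j) / Real.rpow (dist2 x i j) (α + 2)) ∧
    (∑ i : Fin n, ∑ c : Fin 2, (m i)⁻¹ *
        iteratedFDeriv ℝ 2 (Ulog m) x ![basisVec i c, basisVec i c] = 0) :=
  have hm0 : ∀ i, m i ≠ 0 := fun i => (hm i).ne'
  ⟨NBody.massTrace_Ualpha hm0 α hx, NBody.massTrace_Ulog hm0 hx⟩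

/-- `tr(M⁻¹ D²U_α(x̄)) = α² ∑_{i<j} (m_i + m_j)/|x̄_i - x̄_j|^{α+2}` and
`tr(M⁻¹ D²U_log(x̄)) = 0`, where the trace is computed as the sum of the diagonal second
derivatives weighted by the inverse masses. -/
theorem trace_inv_mass_hessian {n : ℕ} (m : Fin n → ℝ) (hm : ∀ i, 0 < m i)
    (α : ℝ) (hα : 0 < α) (hα2 : α < 2)
    (x : Fin n → Fin 2 → ℝ) (hx : ∀ i j, i ≠ j → x i ≠ x j) :
    (∑ i : Fin n, ∑ c : Fin 2, (m i)⁻¹ *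
        iteratedFDeriv ℝ 2 (Ualpha m α) x ![basisVec i c, basisVec i c] =
      α ^ 2 * ∑ i : Fin n, ∑ j ∈ Finset.univ.filter (fun j => i < j),
        (m i + m j) / Real.rpow (dist2 x i j) (α + 2)) ∧
    (∑ i : Fin n, ∑ c : Fin 2, (m i)⁻¹ *
        iteratedFDeriv ℝ 2 (Ulog m) x ![basisVec i c, basisVec i c] = 0) :=
  trace_inv_mass_hessian_general m hm α x hx
end

section
/- Fix n ≥ 8 and let x̄ be the regular n-gon configuration with unit masses on the unit circle. Define ᾱ(n) = 2π²(n² − 3n + 2)/(n³ − π² n + π²). Then ᾱ(n) ∈ (0, 2), and for every α with ᾱ(n) < α < 2 the instability inequality 2/sin²(π/n) − (n−1)(4n + 2α − 8)/(nα) > 0 holds; moreover ᾱ(n) → 0 monotonically as n → ∞. -/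
open Real

/-- `ᾱ(n) = 2π²(n² - 3n + 2) / (n³ - π² n + π²)`. -/
noncomputable def alphaBar (n : ℕ) : ℝ :=
  2 * Real.pi ^ 2 * ((n : ℝ) ^ 2 - 3 * n + 2) /
    ((n : ℝ) ^ 3 - Real.pi ^ 2 * n + Real.pi ^ 2)

lemma pisq_lt_ten : Real.pi ^ 2 < 10 := by
  nlinarith [Real.pi_lt_d2, Real.pi_pos]

lemma denom_pos {x : ℝ} (hx : 8 ≤ x) : 0 < x ^ 3 - Real.pi ^ 2 * x + Real.pi ^ 2 := by
  have hx0 : (0:ℝ) < x := by linarith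
  have h64 : (64:ℝ) ≤ x ^ 2 := by nlinarith
  have h3 : 64 * x ≤ x ^ 3 := by nlinarith [mul_nonneg (show (0:ℝ) ≤ x ^ 2 - 64 by linarith) hx0.le]
  nlinarith [pisq_lt_ten, Real.pi_pos, sq_nonneg Real.pi,
    mul_lt_mul_of_pos_right pisq_lt_ten hx0]

/-- For `n ≥ 8`, `ᾱ(n) ∈ (0, 2)` and for every `α ∈ (ᾱ(n), 2)` the instability inequality
`2/sin²(π/n) - (n-1)(4n + 2α - 8)/(nα) > 0` for the regular `n`-gon holds; moreover `ᾱ(n)`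
tends to `0` monotonically as `n → ∞`. -/
theorem ngon_instability_inequality :
    (∀ n : ℕ, 8 ≤ n →
      (0 < alphaBar n ∧ alphaBar n < 2) ∧
      ∀ α : ℝ, alphaBar n < α → α < 2 →
        2 / Real.sin (Real.pi / n) ^ 2 -
          ((n : ℝ) - 1) * (4 * n + 2 * α - 8) / (n * α) > 0) ∧
    (∀ n : ℕ, 8 ≤ n → alphaBar (n + 1) ≤ alphaBar n) ∧
    Filter.Tendsto alphaBar Filter.atTop (nhds 0) := by
  have hpi := Real.pi_pos
  have hpi2 := pisq_lt_ten
  have hpi2pos : (0:ℝ) < Real.pi ^ 2 := by positivity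
  refine ⟨?_, ?_, ?_⟩
  · intro n hn
    have hn' : (8:ℝ) ≤ (n:ℝ) := by exact_mod_cast hn
    have hnpos : (0:ℝ) < (n:ℝ) := by linarith
    have hDn : 0 < (n:ℝ) ^ 3 - Real.pi ^ 2 * n + Real.pi ^ 2 := denom_pos hn'
    have hq : 0 < (n:ℝ) ^ 2 - 3 * n + 2 := by nlinarith
    have hnum : 0 < 2 * Real.pi ^ 2 * ((n:ℝ) ^ 2 - 3 * n + 2) := by
      nlinarith [mul_pos hpi2pos hq]
    have hpos : 0 < alphaBar n := div_pos hnum hDn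
    constructor
    · refine ⟨hpos, ?_⟩
      rw [alphaBar, div_lt_iff₀ hDn]
      nlinarith [sq_nonneg ((n:ℝ) - 8)]
    · intro α hα1 hα2
      have hα0 : 0 < α := lt_trans hpos hα1
      have hkey : 2 * Real.pi ^ 2 * ((n:ℝ) ^ 2 - 3 * n + 2) <
          α * ((n:ℝ) ^ 3 - Real.pi ^ 2 * n + Real.pi ^ 2) := by
        rw [alphaBar, div_lt_iff₀ hDn] at hα1; linarith
      have hx : 0 < Real.pi / n := by positivity
      have hsin_pos : 0 < Real.sin (Real.pi / n) := by
        apply Real.sin_pos_of_pos_of_lt_pi hx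
        rw [div_lt_iff₀ hnpos]
        nlinarith
      have hsin_lt : Real.sin (Real.pi / n) < Real.pi / n := Real.sin_lt hx
      have hs2 : Real.sin (Real.pi / n) ^ 2 * (n:ℝ) ^ 2 < Real.pi ^ 2 := by
        have h := pow_lt_pow_left₀ hsin_lt hsin_pos.le (n := 2) two_ne_zero
        rw [div_pow] at h
        have h2 : Real.sin (Real.pi / n) ^ 2 * (n:ℝ) ^ 2 <
            Real.pi ^ 2 / (n:ℝ) ^ 2 * (n:ℝ) ^ 2 := by
          apply mul_lt_mul_of_pos_right h (by positivity)
        rwa [div_mul_cancel₀ _ (by positivity : ((n:ℝ) ^ 2) ≠ 0)] at h2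
      have h1 : 2 * (n:ℝ) ^ 2 / Real.pi ^ 2 < 2 / Real.sin (Real.pi / n) ^ 2 := by
        rw [div_lt_div_iff₀ hpi2pos (by positivity)]
        nlinarith
      have h2 : ((n:ℝ) - 1) * (4 * n + 2 * α - 8) / (n * α) < 2 * (n:ℝ) ^ 2 / Real.pi ^ 2 := by
        rw [div_lt_div_iff₀ (by positivity) hpi2pos]
        nlinarith [hkey]
      linarith
  · intro n hn
    have hn' : (8:ℝ) ≤ (n:ℝ) := by exact_mod_cast hn
    have hDn : 0 < (n:ℝ) ^ 3 - Real.pi ^ 2 * n + Real.pi ^ 2 := denom_pos hn'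
    have hDm : 0 < ((n:ℝ) + 1) ^ 3 - Real.pi ^ 2 * ((n:ℝ) + 1) + Real.pi ^ 2 :=
      denom_pos (by linarith)
    rw [alphaBar, alphaBar, div_le_div_iff₀ (by push_cast; exact_mod_cast hDm) hDn]
    push_cast
    have hnpos : (0:ℝ) < (n:ℝ) := by linarith
    have key : 2 * Real.pi ^ 2 * ((n:ℝ) ^ 2 - 3 * n + 2) *
          (((n:ℝ) + 1) ^ 3 - Real.pi ^ 2 * ((n:ℝ) + 1) + Real.pi ^ 2)
        - 2 * Real.pi ^ 2 * (((n:ℝ) + 1) ^ 2 - 3 * ((n:ℝ) + 1) + 2) *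
          ((n:ℝ) ^ 3 - Real.pi ^ 2 * (n:ℝ) + Real.pi ^ 2)
        = 2 * Real.pi ^ 2 * (((n:ℝ) - 1) *
            (((n:ℝ) ^ 3 - 3 * n ^ 2 - 5 * n - 2) + Real.pi ^ 2 * n)) := by ring
    have hc : (0:ℝ) ≤ (n:ℝ) ^ 3 - 3 * n ^ 2 - 5 * n - 2 := by
      nlinarith [mul_nonneg (show (0:ℝ) ≤ (n:ℝ) - 8 by linarith) (sq_nonneg (n:ℝ))]
    have hsum : (0:ℝ) ≤ 2 * Real.pi ^ 2 * (((n:ℝ) - 1) *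
        (((n:ℝ) ^ 3 - 3 * n ^ 2 - 5 * n - 2) + Real.pi ^ 2 * n)) := by
      apply mul_nonneg (by positivity)
      exact mul_nonneg (by linarith) (by nlinarith [mul_pos hpi2pos hnpos])
    nlinarith [key, hsum]
  · apply squeeze_zero'
      (g := fun n : ℕ => 4 * Real.pi ^ 2 / (n : ℝ))
    · filter_upwards [Filter.eventually_ge_atTop 8] with n hn
      have hn' : (8:ℝ) ≤ (n:ℝ) := by exact_mod_cast hn
      have hDn : 0 < (n:ℝ) ^ 3 - Real.pi ^ 2 * n + Real.pi ^ 2 := denom_pos hn'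
      have hq : 0 < (n:ℝ) ^ 2 - 3 * n + 2 := by nlinarith
      have hnum : 0 ≤ 2 * Real.pi ^ 2 * ((n:ℝ) ^ 2 - 3 * n + 2) := by
        nlinarith [mul_pos hpi2pos hq]
      exact div_nonneg hnum hDn.le
    · filter_upwards [Filter.eventually_ge_atTop 8] with n hn
      have hn' : (8:ℝ) ≤ (n:ℝ) := by exact_mod_cast hn
      have hnpos : (0:ℝ) < (n:ℝ) := by linarith
      have hDn : 0 < (n:ℝ) ^ 3 - Real.pi ^ 2 * n + Real.pi ^ 2 := denom_pos hn'
      rw [alphaBar, div_le_div_iff₀ hDn hnpos]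
      nlinarith [mul_pos hpi2pos hnpos, mul_pos hpi2pos (mul_pos hnpos hnpos),
        mul_pos hpi2pos (mul_pos hnpos (mul_pos hnpos hnpos))]
    · exact tendsto_const_div_atTop_nhds_zero_nat _
end
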